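/- Let (Z_t)_{t ∈ ℤ} be a stationary 𝒵-valued process with β-mixing coefficients β(k), let a, μ ≥ 1 be integers with n = 2aμ, let M > 0, let B and p be positive integers, and let ℱ be a finite set of measurable functions from 𝒵 to [0, M] with cardinality at most 2^{Bp}. For each ℓ_f ∈ ℱ set h_f(B_j) = (1/a) Σ_{i=1}^a ℓ_f(Z_{a(j−1)+i}) and L(f) = E[ℓ_f(Z_1)]. Then for each k ∈ {1, 2} and every ε > 0: P( ∃ ℓ_f ∈ ℱ : L(f) − (1/μ) Σ_{j=0}^{μ−1} h_f(B_{k+2j}) ≥ ε ) ≤ 2^{Bp} exp(−μ ε² / M²) + (μ − 1) β(a). -/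

import Mathlib

open MeasureTheory ProbabilityTheory

/-- Total variation distance between two measures. -/
noncomputable def tvDist {α : Type*} [MeasurableSpace α] (μ ν : Measure α) : ℝ :=
  ⨆ A : {A : Set α // MeasurableSet A}, |(μ A).toReal - (ν A).toReal|

/-- β-mixing coefficient of the process `Z` under `P`: the supremum over `t` of the
total variation distance between the joint law of `((Z s)_{s ≤ t}, (Z s)_{s ≥ t+k})`
and the product of the marginal laws. -/
noncomputable def betaMix {Ω 𝒵 : Type*} [MeasurableSpace Ω] [MeasurableSpace 𝒵]
    (P : Measure Ω) (Z : ℤ → Ω → 𝒵) (k : ℕ) : ℝ :=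
  ⨆ t : ℤ, tvDist
    (P.map (fun ω => (fun s : {s : ℤ // s ≤ t} => Z s ω,
                      fun s : {s : ℤ // t + k ≤ s} => Z s ω)))
    ((P.map (fun ω => fun s : {s : ℤ // s ≤ t} => Z s ω)).prod
      (P.map (fun ω => fun s : {s : ℤ // t + k ≤ s} => Z s ω)))

/-- Stationarity of the process `Z` under `P`. -/
def Stationary {Ω 𝒵 : Type*} [MeasurableSpace Ω] [MeasurableSpace 𝒵]
    (P : Measure Ω) (Z : ℤ → Ω → 𝒵) : Prop :=
  ∀ s : ℤ, P.map (fun ω => fun t : ℤ => Z (t + s) ω) = P.map (fun ω => fun t : ℤ => Z t ω)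

/-!
Split the `μ` blocks `B_k, B_{k+2}, …` apart one at a time: cutting the process after the
first block and before the next one (a gap of `a` indices) changes the joint law of the blocks
by at most `β(a)` in total variation, so after `μ - 1` cuts the blocks may be replaced by
independent copies, all distributed like `B_1` by stationarity, at a cost of `(μ - 1) β(a)`.
For independent blocks the block averages `h_f` are independent, `[0, M]`-valued, with mean
`L(f)`, so Hoeffding's inequality bounds each deviation by `exp(-2με²/M²)`, and a union bound
over `ℱ` finishes the proof.
-/

section TotalVariation

variable {α β : Type*} [MeasurableSpace α] [MeasurableSpace β]

lemma measureReal_prod_apply (ρ : Measure α) (ν : Measure β) [IsFiniteMeasure ν]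
    {S : Set (α × β)} (hS : MeasurableSet S) :
    (ρ.prod ν).real S = ∫ x, ν.real (Prod.mk x ⁻¹' S) ∂ρ := by
  rw [measureReal_def, Measure.prod_apply hS, ← integral_toReal
    (measurable_measure_prodMk_left hS).aemeasurable (ae_of_all _ fun _ => measure_lt_top _ _)]
  rfl

lemma tvDist_nonneg (μ ν : Measure α) : 0 ≤ tvDist μ ν :=
  Real.iSup_nonneg fun _ => abs_nonneg _

lemma tvDist_self (μ : Measure α) : tvDist μ μ = 0 := by
  simp [tvDist]

variable (μ ν ρ : Measure α) [IsProbabilityMeasure μ] [IsProbabilityMeasure ν]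
  [IsProbabilityMeasure ρ]

lemma tvDist_le_one : tvDist μ ν ≤ 1 :=
  Real.iSup_le (fun _ => abs_sub_le_of_nonneg_of_le measureReal_nonneg measureReal_le_one
    measureReal_nonneg measureReal_le_one) zero_le_one

lemma abs_measureReal_sub_le_tvDist {A : Set α} (hA : MeasurableSet A) :
    |μ.real A - ν.real A| ≤ tvDist μ ν := by
  refine le_ciSup (f := fun A : {A : Set α // MeasurableSet A} => |μ.real A - ν.real A|)
    ⟨1, ?_⟩ ⟨A, hA⟩
  rintro _ ⟨A, rfl⟩
  exact abs_sub_le_of_nonneg_of_le measureReal_nonneg measureReal_le_one measureReal_nonneg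
    measureReal_le_one

lemma tvDist_triangle : tvDist μ ν ≤ tvDist μ ρ + tvDist ρ ν :=
  Real.iSup_le (fun A => (abs_sub_le _ _ _).trans <| add_le_add
      (abs_measureReal_sub_le_tvDist μ ρ A.2) (abs_measureReal_sub_le_tvDist ρ ν A.2))
    (add_nonneg (tvDist_nonneg _ _) (tvDist_nonneg _ _))

lemma tvDist_map_le {f : α → β} (hf : Measurable f) :
    tvDist (μ.map f) (ν.map f) ≤ tvDist μ ν :=
  Real.iSup_le (fun A => by
      simpa only [measureReal_def, Measure.map_apply hf A.2] using
        abs_measureReal_sub_le_tvDist μ ν (hf A.2))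
    (tvDist_nonneg _ _)

lemma tvDist_map_measurableEquiv (e : α ≃ᵐ β) : tvDist (μ.map e) (ν.map e) = tvDist μ ν := by
  refine le_antisymm (tvDist_map_le μ ν e.measurable) ?_
  have := Measure.isProbabilityMeasure_map (μ := μ) e.measurable.aemeasurable
  have := Measure.isProbabilityMeasure_map (μ := ν) e.measurable.aemeasurable
  simpa [Measure.map_map e.symm.measurable e.measurable] using
    tvDist_map_le (μ.map e) (ν.map e) e.symm.measurable

lemma tvDist_prod_le (ν₁ ν₂ : Measure β) [IsProbabilityMeasure ν₁] [IsProbabilityMeasure ν₂] :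
    tvDist (ρ.prod ν₁) (ρ.prod ν₂) ≤ tvDist ν₁ ν₂ := by
  refine Real.iSup_le (fun S => ?_) (tvDist_nonneg _ _)
  have hint (ν : Measure β) [IsFiniteMeasure ν] :=
    Measure.integrable_measure_prodMk_left (μ := ρ) (ν := ν) S.2 (measure_ne_top _ _)
  change |(ρ.prod ν₁).real S - (ρ.prod ν₂).real S| ≤ _
  rw [measureReal_prod_apply ρ _ S.2, measureReal_prod_apply ρ _ S.2,
    ← integral_sub (hint ν₁) (hint ν₂)]
  simpa using norm_integral_le_of_norm_le_const (μ := ρ)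
    (f := fun x => ν₁.real (Prod.mk x ⁻¹' S) - ν₂.real (Prod.mk x ⁻¹' S))
    (ae_of_all _ fun x => abs_measureReal_sub_le_tvDist ν₁ ν₂ (measurable_prodMk_left S.2))

end TotalVariation

section RandomVectors

variable {Ω β γ₁ γ₂ δ₁ δ₂ : Type*} [MeasurableSpace Ω] [MeasurableSpace β]
  [MeasurableSpace γ₁] [MeasurableSpace γ₂] [MeasurableSpace δ₁] [MeasurableSpace δ₂]
  (P : Measure Ω) [IsProbabilityMeasure P]

lemma tvDist_map_prodMk_comp_le {X₁ : Ω → γ₁} {X₂ : Ω → γ₂} (hX₁ : Measurable X₁)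
    (hX₂ : Measurable X₂) {g₁ : γ₁ → δ₁} {g₂ : γ₂ → δ₂} (hg₁ : Measurable g₁)
    (hg₂ : Measurable g₂) :
    tvDist (P.map (Prod.map g₁ g₂ ∘ fun ω => (X₁ ω, X₂ ω)))
        ((P.map (g₁ ∘ X₁)).prod (P.map (g₂ ∘ X₂)))
      ≤ tvDist (P.map fun ω => (X₁ ω, X₂ ω)) ((P.map X₁).prod (P.map X₂)) := by
  have := Measure.isProbabilityMeasure_map (μ := P) hX₁.aemeasurable
  have := Measure.isProbabilityMeasure_map (μ := P) hX₂.aemeasurable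
  have := Measure.isProbabilityMeasure_map (μ := P) (hX₁.prodMk hX₂).aemeasurable
  rw [← Measure.map_map hg₁ hX₁, ← Measure.map_map hg₂ hX₂, Measure.map_prod_map _ _ hg₁ hg₂,
    ← Measure.map_map (hg₁.prodMap hg₂) (hX₁.prodMk hX₂)]
  exact tvDist_map_le _ _ (hg₁.prodMap hg₂)

lemma tvDist_map_pi_eq_zero_of_subsingleton {ι : Type*} [Fintype ι] [Subsingleton ι]
    {Y : ι → Ω → β} (hY : ∀ i, Measurable (Y i)) :
    tvDist (P.map fun ω i => Y i ω) (Measure.pi fun i => P.map (Y i)) = 0 := by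
  rw [← (iIndepFun_iff_map_fun_eq_pi_map fun i => (hY i).aemeasurable).1
    iIndepFun.of_subsingleton, tvDist_self]

lemma tvDist_map_pi_le_head_tail {n : ℕ} {Y : Fin (n + 1) → Ω → β}
    (hY : ∀ i, Measurable (Y i)) :
    tvDist (P.map fun ω i => Y i ω) (Measure.pi fun i => P.map (Y i))
      ≤ tvDist (P.map fun ω => (Y 0 ω, fun i : Fin n => Y i.succ ω))
          ((P.map (Y 0)).prod (P.map fun ω (i : Fin n) => Y i.succ ω))
        + tvDist (P.map fun ω (i : Fin n) => Y i.succ ω)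
          (Measure.pi fun i : Fin n => P.map (Y i.succ)) := by
  have hvec : Measurable fun ω i => Y i ω := measurable_pi_lambda _ hY
  have htail : Measurable fun ω (i : Fin n) => Y i.succ ω := measurable_pi_lambda _ fun _ => hY _
  have := fun i => Measure.isProbabilityMeasure_map (μ := P) (hY i).aemeasurable
  have := Measure.isProbabilityMeasure_map (μ := P) hvec.aemeasurable
  have := Measure.isProbabilityMeasure_map (μ := P) htail.aemeasurable
  have := Measure.isProbabilityMeasure_map (μ := P) ((hY 0).prodMk htail).aemeasurable
  let e := MeasurableEquiv.piFinSuccAbove (fun _ : Fin (n + 1) => β) 0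
  have hjoint : (P.map fun ω i => Y i ω).map e
      = P.map fun ω => (Y 0 ω, fun i : Fin n => Y i.succ ω) := by
    rw [Measure.map_map e.measurable hvec]
    rfl
  have hpi : (Measure.pi fun i => P.map (Y i)).map e
      = (P.map (Y 0)).prod (Measure.pi fun i : Fin n => P.map (Y i.succ)) := by
    simpa only [Fin.succAbove_zero] using
      (measurePreserving_piFinSuccAbove (fun i => P.map (Y i)) 0).map_eq
  rw [← tvDist_map_measurableEquiv _ _ e, hjoint, hpi]
  exact (tvDist_triangle _ _ _).trans (add_le_add le_rfl (tvDist_prod_le _ _ _))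

end RandomVectors

open Real in
theorem measureReal_pi_sum_sub_ge_le {α : Type*} [MeasurableSpace α] (ν : Measure α)
    [IsProbabilityMeasure ν] {g : α → ℝ} (hg : Measurable g) {l u : ℝ}
    (hgb : ∀ x, g x ∈ Set.Icc l u) (m : ℕ) {ε : ℝ} (hε : 0 ≤ ε) :
    (Measure.pi fun _ : Fin m => ν).real {x | m * ε ≤ ∑ j, (∫ y, g y ∂ν - g (x j))}
      ≤ exp (-2 * m * ε ^ 2 / (u - l) ^ 2) := by
  have hlu : l ≤ u := by
    obtain ⟨x⟩ : Nonempty α := nonempty_of_isProbabilityMeasure ν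
    exact (hgb x).1.trans (hgb x).2
  have hsubG (j : Fin m) : HasSubgaussianMGF (fun x : Fin m → α => ∫ y, g y ∂ν - g (x j))
      ((‖u - l‖₊ / 2) ^ 2) (Measure.pi fun _ => ν) := by
    have h : HasSubgaussianMGF (fun y => ∫ y, g y ∂ν - g y) ((‖u - l‖₊ / 2) ^ 2)
        ((Measure.pi fun _ => ν).map fun x => x j) := by
      rw [(measurePreserving_eval (fun _ : Fin m => ν) j).map_eq]
      convert (hasSubgaussianMGF_of_mem_Icc hg.aemeasurable (ae_of_all ν hgb)).neg using 1
      ext y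
      simp
    exact h.of_map (Y := fun x : Fin m → α => x j) (measurable_pi_apply j).aemeasurable
  have hindep : iIndepFun (fun (j : Fin m) (x : Fin m → α) => ∫ y, g y ∂ν - g (x j))
      (Measure.pi fun _ => ν) :=
    iIndepFun_pi (X := fun _ y => ∫ y, g y ∂ν - g y) fun _ =>
      (measurable_const.sub hg).aemeasurable
  refine (HasSubgaussianMGF.measure_sum_ge_le_of_iIndepFun hindep (fun j _ => hsubG j)
    (mul_nonneg m.cast_nonneg hε)).trans_eq ?_
  congr 1
  rw [Finset.sum_const, Finset.card_univ, Fintype.card_fin, nsmul_eq_mul]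
  push_cast
  rw [Real.norm_of_nonneg (sub_nonneg.2 hlu)]
  -- when `m = 0` or `u = l` both exponents are `0`, by division by zero
  rcases eq_or_ne (m : ℝ) 0 with hm | hm
  · simp [hm]
  rcases eq_or_ne (u - l) 0 with hul | hul
  · simp [hul]
  field_simp

open Real in
theorem measureReal_pi_exists_sub_mean_ge_le {α ι : Type*} [MeasurableSpace α] (ν : Measure α)
    [IsProbabilityMeasure ν] (s : Finset ι) {g : ι → α → ℝ} (hg : ∀ i ∈ s, Measurable (g i))
    {l u : ℝ} (hgb : ∀ i ∈ s, ∀ x, g i x ∈ Set.Icc l u) {m : ℕ} (hm : m ≠ 0) {ε : ℝ}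
    (hε : 0 ≤ ε) :
    (Measure.pi fun _ : Fin m => ν).real
        {x | ∃ i ∈ s, ε ≤ ∫ y, g i y ∂ν - (1 / m) * ∑ j, g i (x j)}
      ≤ s.card * exp (-2 * m * ε ^ 2 / (u - l) ^ 2) := by
  have hsubset : {x : Fin m → α | ∃ i ∈ s, ε ≤ ∫ y, g i y ∂ν - (1 / m) * ∑ j, g i (x j)}
      ⊆ ⋃ i ∈ s, {x | m * ε ≤ ∑ j, (∫ y, g i y ∂ν - g i (x j))} := by
    rintro x ⟨i, hi, hdev⟩
    refine Set.mem_biUnion hi ?_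
    have hm' : (0 : ℝ) < m := Nat.cast_pos.2 (Nat.pos_of_ne_zero hm)
    rw [Set.mem_ofPred_eq, Finset.sum_sub_distrib, Finset.sum_const, Finset.card_univ,
      Fintype.card_fin, nsmul_eq_mul]
    calc (m : ℝ) * ε ≤ m * (∫ y, g i y ∂ν - (1 / m) * ∑ j, g i (x j)) := by gcongr
      _ = _ := by field_simp
  calc _ ≤ (Measure.pi fun _ : Fin m => ν).real
        (⋃ i ∈ s, {x | m * ε ≤ ∑ j, (∫ y, g i y ∂ν - g i (x j))}) :=
          measureReal_mono hsubset (measure_ne_top _ _)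
    _ ≤ ∑ i ∈ s, (Measure.pi fun _ : Fin m => ν).real
        {x | m * ε ≤ ∑ j, (∫ y, g i y ∂ν - g i (x j))} := measureReal_biUnion_finset_le _ _
    _ ≤ ∑ i ∈ s, exp (-2 * m * ε ^ 2 / (u - l) ^ 2) :=
        Finset.sum_le_sum fun i hi => measureReal_pi_sum_sub_ge_le ν (hg i hi) (hgb i hi) m hε
    _ = _ := by rw [Finset.sum_const, nsmul_eq_mul]

section Blocks

variable {Ω 𝒵 : Type*} [MeasurableSpace Ω] [MeasurableSpace 𝒵] (P : Measure Ω)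
  {Z : ℤ → Ω → 𝒵}

def block (Z : ℤ → Ω → 𝒵) (a : ℕ) (b : ℤ) (ω : Ω) : Fin a → 𝒵 :=
  fun i => Z (b + i) ω

noncomputable def blockAverage (a : ℕ) (f : 𝒵 → ℝ) (y : Fin a → 𝒵) : ℝ :=
  (1 / a) * ∑ i, f (y i)

omit [MeasurableSpace 𝒵] in
lemma blockAverage_mem_Icc {a : ℕ} (ha : a ≠ 0) {f : 𝒵 → ℝ} {l u : ℝ}
    (hf : ∀ z, f z ∈ Set.Icc l u) (y : Fin a → 𝒵) : blockAverage a f y ∈ Set.Icc l u := by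
  have ha' : (0 : ℝ) < a := Nat.cast_pos.2 (Nat.pos_of_ne_zero ha)
  have hsum_le : ∑ i, f (y i) ≤ a * u := by
    simpa using Finset.sum_le_card_nsmul Finset.univ _ u fun i _ => (hf (y i)).2
  have hle_sum : a * l ≤ ∑ i, f (y i) := by
    simpa using Finset.card_nsmul_le_sum Finset.univ _ l fun i _ => (hf (y i)).1
  rw [blockAverage, one_div_mul_eq_div]
  exact ⟨(le_div_iff₀ ha').2 (by linarith), (div_le_iff₀ ha').2 (by linarith)⟩

lemma measurable_blockAverage (a : ℕ) {f : 𝒵 → ℝ} (hf : Measurable f) :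
    Measurable (blockAverage a f) :=
  (Finset.measurable_sum _ fun i _ => hf.comp (measurable_pi_apply i)).const_mul _

variable (hZ : ∀ t, Measurable (Z t))
include hZ

lemma measurable_block (a : ℕ) (b : ℤ) : Measurable (block Z a b) :=
  measurable_pi_lambda _ fun _ => hZ _

lemma tvDist_past_future_le_betaMix [IsProbabilityMeasure P] (a : ℕ) (t : ℤ) :
    tvDist (P.map fun ω => (fun s : {s : ℤ // s ≤ t} => Z s ω,
          fun s : {s : ℤ // t + a ≤ s} => Z s ω))
        ((P.map fun ω (s : {s : ℤ // s ≤ t}) => Z s ω).prod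
          (P.map fun ω (s : {s : ℤ // t + a ≤ s}) => Z s ω))
      ≤ betaMix P Z a := by
  refine le_ciSup (f := fun t : ℤ => tvDist (P.map fun ω => (fun s : {s : ℤ // s ≤ t} => Z s ω,
      fun s : {s : ℤ // t + a ≤ s} => Z s ω)) ((P.map fun ω (s : {s : ℤ // s ≤ t}) => Z s ω).prod
        (P.map fun ω (s : {s : ℤ // t + a ≤ s}) => Z s ω))) ⟨1, ?_⟩ t
  rintro _ ⟨t, rfl⟩
  have hpast : Measurable fun ω (s : {s : ℤ // s ≤ t}) => Z s ω :=
    measurable_pi_lambda _ fun _ => hZ _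
  have hfuture : Measurable fun ω (s : {s : ℤ // t + a ≤ s}) => Z s ω :=
    measurable_pi_lambda _ fun _ => hZ _
  have := Measure.isProbabilityMeasure_map (μ := P) hpast.aemeasurable
  have := Measure.isProbabilityMeasure_map (μ := P) hfuture.aemeasurable
  have := Measure.isProbabilityMeasure_map (μ := P) (hpast.prodMk hfuture).aemeasurable
  exact tvDist_le_one _ _

lemma tvDist_block_laterBlocks_le_betaMix [IsProbabilityMeasure P] (a m : ℕ)
    (b : Fin (m + 1) → ℤ) (hb : ∀ j, 0 < j → b 0 + 2 * a - 1 ≤ b j) :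
    tvDist (P.map fun ω => (block Z a (b 0) ω, fun j : Fin m => block Z a (b j.succ) ω))
        ((P.map (block Z a (b 0))).prod (P.map fun ω (j : Fin m) => block Z a (b j.succ) ω))
      ≤ betaMix P Z a := by
  set t : ℤ := b 0 + a - 1
  let firstBlock (z : {s : ℤ // s ≤ t} → 𝒵) (i : Fin a) : 𝒵 := z ⟨b 0 + i, by omega⟩
  let laterBlocks (z : {s : ℤ // t + a ≤ s} → 𝒵) (j : Fin m) (i : Fin a) : 𝒵 :=
    z ⟨b j.succ + i, by have := hb j.succ (Fin.succ_pos j); omega⟩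
  have hpast : Measurable fun ω (s : {s : ℤ // s ≤ t}) => Z s ω :=
    measurable_pi_lambda _ fun _ => hZ _
  have hfuture : Measurable fun ω (s : {s : ℤ // t + a ≤ s}) => Z s ω :=
    measurable_pi_lambda _ fun _ => hZ _
  have hfirst : Measurable firstBlock := measurable_pi_lambda _ fun _ => measurable_pi_apply _
  have hlater : Measurable laterBlocks :=
    measurable_pi_lambda _ fun _ => measurable_pi_lambda _ fun _ => measurable_pi_apply _
  exact (tvDist_map_prodMk_comp_le P hpast hfuture hfirst hlater).trans
    (tvDist_past_future_le_betaMix P hZ a t)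

theorem tvDist_map_blocks_le_betaMix [IsProbabilityMeasure P] (a m : ℕ) (b : Fin (m + 1) → ℤ)
    (hb : ∀ i j, i < j → b i + 2 * a - 1 ≤ b j) :
    tvDist (P.map fun ω j => block Z a (b j) ω) (Measure.pi fun j => P.map (block Z a (b j)))
      ≤ m * betaMix P Z a := by
  induction m with
  | zero =>
    have : Subsingleton (Fin (0 + 1)) := inferInstanceAs (Subsingleton (Fin 1))
    simp [tvDist_map_pi_eq_zero_of_subsingleton P fun j => measurable_block hZ a (b j)]
  | succ m ih =>
    calc _ ≤ _ := tvDist_map_pi_le_head_tail P fun j => measurable_block hZ a (b j)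
      _ ≤ betaMix P Z a + m * betaMix P Z a :=
          add_le_add (tvDist_block_laterBlocks_le_betaMix P hZ a _ b fun j => hb 0 j)
            (ih _ fun i j hij => hb _ _ (Fin.succ_lt_succ_iff.2 hij))
      _ = (m + 1 : ℕ) * betaMix P Z a := by push_cast; ring

namespace Stationary

variable {P} (hstat : Stationary P Z)
include hstat

theorem map_comp_shift {γ : Type*} [MeasurableSpace γ] {F : (ℤ → 𝒵) → γ} (hF : Measurable F)
    (s : ℤ) : P.map (fun ω => F fun t => Z (t + s) ω) = P.map (fun ω => F fun t => Z t ω) := by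
  change P.map (F ∘ _) = P.map (F ∘ _)
  rw [← Measure.map_map hF (measurable_pi_lambda _ fun _ => hZ _), hstat s,
    Measure.map_map hF (measurable_pi_lambda _ fun _ => hZ _)]

theorem map_eq (c d : ℤ) : P.map (Z c) = P.map (Z d) := by
  simpa using hstat.map_comp_shift hZ (measurable_pi_apply d) (c - d)

theorem map_block_eq (a : ℕ) (c d : ℤ) : P.map (block Z a c) = P.map (block Z a d) := by
  convert hstat.map_comp_shift hZ (F := fun z (i : Fin a) => z (d + i))
    (measurable_pi_lambda _ fun _ => measurable_pi_apply _) (c - d) using 2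
  · ext ω i
    simp only [block]
    ring_nf
  · rfl

theorem integral_blockAverage {a : ℕ} (ha : a ≠ 0) {f : 𝒵 → ℝ} (hf : Measurable f) {d : ℤ}
    (hfi : Integrable (fun ω => f (Z d ω)) P) (c : ℤ) :
    ∫ y, blockAverage a f y ∂(P.map (block Z a c)) = ∫ ω, f (Z d ω) ∂P := by
  have hcoord (s : ℤ) : ∫ ω, f (Z s ω) ∂P = ∫ ω, f (Z d ω) ∂P := by
    rw [← integral_map (hZ s).aemeasurable hf.aestronglyMeasurable, hstat.map_eq hZ s d,
      integral_map (hZ d).aemeasurable hf.aestronglyMeasurable]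
  have hint (s : ℤ) : Integrable (fun ω => f (Z s ω)) P := by
    have h := (integrable_map_measure hf.aestronglyMeasurable (hZ d).aemeasurable).2 hfi
    rw [← hstat.map_eq hZ s d] at h
    exact (integrable_map_measure hf.aestronglyMeasurable (hZ s).aemeasurable).1 h
  rw [integral_map (measurable_block hZ a c).aemeasurable
    (measurable_blockAverage a hf).aestronglyMeasurable]
  simp only [blockAverage, block]
  rw [integral_const_mul, integral_finsetSum _ fun i _ => hint _]
  simp only [hcoord, Finset.sum_const, Finset.card_univ, Fintype.card_fin, nsmul_eq_mul]
  field_simp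

theorem measureReal_map_blocks_le [IsProbabilityMeasure P] (a m : ℕ) (b : Fin (m + 1) → ℤ)
    (hb : ∀ i j, i < j → b i + 2 * a - 1 ≤ b j) (d : ℤ) {S : Set (Fin (m + 1) → Fin a → 𝒵)}
    (hS : MeasurableSet S) :
    (P.map fun ω j => block Z a (b j) ω).real S
      ≤ (Measure.pi fun _ => P.map (block Z a d)).real S + m * betaMix P Z a := by
  have := Measure.isProbabilityMeasure_map (μ := P)
    (measurable_pi_lambda (fun ω j => block Z a (b j) ω)
      fun j => measurable_block hZ a (b j)).aemeasurable
  have := Measure.isProbabilityMeasure_map (μ := P) (measurable_block hZ a d).aemeasurable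
  have hdecouple := tvDist_map_blocks_le_betaMix P hZ a m b hb
  simp only [hstat.map_block_eq hZ a _ d] at hdecouple
  linarith [(abs_le.1 ((abs_measureReal_sub_le_tvDist _ _ hS).trans hdecouple)).2]

open Real in
theorem measureReal_pi_exists_risk_sub_ge_le [IsProbabilityMeasure P] {a : ℕ} (ha : a ≠ 0)
    (ℱ : Finset (𝒵 → ℝ)) (hFmeas : ∀ f ∈ ℱ, Measurable f) {l u : ℝ}
    (hFbdd : ∀ f ∈ ℱ, ∀ z, f z ∈ Set.Icc l u) {m : ℕ} (hm : m ≠ 0) {ε : ℝ} (hε : 0 ≤ ε)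
    (c : ℤ) :
    (Measure.pi fun _ : Fin m => P.map (block Z a c)).real
        {x | ∃ f ∈ ℱ, ε ≤ ∫ ω, f (Z c ω) ∂P - (1 / m) * ∑ j, blockAverage a f (x j)}
      ≤ ℱ.card * exp (-2 * m * ε ^ 2 / (u - l) ^ 2) := by
  have := Measure.isProbabilityMeasure_map (μ := P) (measurable_block hZ a c).aemeasurable
  have hrisk (f) (hf : f ∈ ℱ) :
      ∫ y, blockAverage a f y ∂(P.map (block Z a c)) = ∫ ω, f (Z c ω) ∂P :=
    hstat.integral_blockAverage hZ ha (hFmeas f hf) (Integrable.of_mem_Icc l u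
      ((hFmeas f hf).comp (hZ c)).aemeasurable (ae_of_all _ fun _ => hFbdd f hf _)) c
  refine (measureReal_mono ?_ (measure_ne_top _ _)).trans
    (measureReal_pi_exists_sub_mean_ge_le _ ℱ (fun f hf => measurable_blockAverage a (hFmeas f hf))
      (fun f hf => blockAverage_mem_Icc ha (hFbdd f hf)) hm hε)
  rintro x ⟨f, hf, hdev⟩
  exact ⟨f, hf, by rwa [hrisk f hf]⟩

end Stationary

end Blocks

lemma measurableSet_exists_mem_finset_le {α ι : Type*} [MeasurableSpace α] (s : Finset ι)
    {F : ι → α → ℝ} (hF : ∀ i ∈ s, Measurable (F i)) (c : ℝ) :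
    MeasurableSet {x | ∃ i ∈ s, c ≤ F i x} := by
  have hunion : {x | ∃ i ∈ s, c ≤ F i x} = ⋃ i ∈ s, {x | c ≤ F i x} := by
    ext x
    simp
  rw [hunion]
  exact s.measurableSet_biUnion fun i hi => measurableSet_le measurable_const (hF i hi)

lemma alternateBlocks_gap {a k : ℕ} (hk : 1 ≤ k) {i j : ℕ} (hij : i < j) :
    ((a * (k + 2 * i - 1) + 1 : ℕ) : ℤ) + 2 * a - 1 ≤ ((a * (k + 2 * j - 1) + 1 : ℕ) : ℤ) := by
  have : a * (k + 2 * i - 1) + 2 * a ≤ a * (k + 2 * j - 1) := by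
    rw [show 2 * a = a * 2 by ring, ← mul_add]
    exact Nat.mul_le_mul_left a (by omega)
  have : ((a * (k + 2 * i - 1) + 1 : ℕ) : ℤ) + 2 * a ≤ ((a * (k + 2 * j - 1) + 1 : ℕ) : ℤ) := by
    exact_mod_cast (by omega : a * (k + 2 * i - 1) + 1 + 2 * a ≤ a * (k + 2 * j - 1) + 1)
  omega

theorem block_deviation_bound_general
    {Ω 𝒵 : Type*} [MeasurableSpace Ω] [MeasurableSpace 𝒵]
    (P : Measure Ω) [IsProbabilityMeasure P]
    (Z : ℤ → Ω → 𝒵) (hZmeas : ∀ t, Measurable (Z t))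
    (hstat : Stationary P Z)
    (a μ : ℕ) (ha : 1 ≤ a) (hμ : 1 ≤ μ)
    (M : ℝ)
    (B p : ℕ)
    (ℱ : Finset (𝒵 → ℝ))
    (hFmeas : ∀ f ∈ ℱ, Measurable f)
    (hFbdd : ∀ f ∈ ℱ, ∀ z, f z ∈ Set.Icc (0 : ℝ) M)
    (hcard : ℱ.card ≤ 2 ^ (B * p))
    (k : ℕ) (hk : k = 1 ∨ k = 2)
    (ε : ℝ) (hε : 0 < ε) :
    (P {ω | ∃ f ∈ ℱ,
        ∫ ω', f (Z 1 ω') ∂P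
          - (1 / μ) * ∑ j : Fin μ, (1 / a) *
              ∑ i : Fin a, f (Z ((a * (k + 2 * (j : ℕ) - 1) + (i : ℕ) + 1 : ℕ) : ℤ) ω)
          ≥ ε}).toReal
      ≤ (2 : ℝ) ^ (B * p) * Real.exp (-(μ * ε ^ 2) / M ^ 2)
        + ((μ : ℝ) - 1) * betaMix P Z a := by
  obtain ⟨m, rfl⟩ : ∃ m, μ = m + 1 := ⟨μ - 1, by omega⟩
  -- `b j` is the first index of the block `B_{k+2j}`
  let b (j : Fin (m + 1)) : ℤ := ((a * (k + 2 * (j : ℕ) - 1) + 1 : ℕ) : ℤ)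
  have hblocks : (fun ω (j : Fin (m + 1)) (i : Fin a) =>
      Z ((a * (k + 2 * (j : ℕ) - 1) + (i : ℕ) + 1 : ℕ) : ℤ) ω)
      = fun ω j => block Z a (b j) ω := by
    ext ω j i
    simp only [block, b]
    push_cast
    ring_nf
  set S : Set (Fin (m + 1) → Fin a → 𝒵) := {x | ∃ f ∈ ℱ,
    ε ≤ ∫ ω, f (Z 1 ω) ∂P - (1 / (m + 1 : ℕ)) * ∑ j, blockAverage a f (x j)}
  have hS : MeasurableSet S := measurableSet_exists_mem_finset_le ℱ (fun f hf =>
    measurable_const.sub (measurable_const.mul (Finset.measurable_sum _ fun j _ =>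
      (measurable_blockAverage a (hFmeas f hf)).comp (measurable_pi_apply j)))) ε
  change (P ((fun ω (j : Fin (m + 1)) (i : Fin a) =>
    Z ((a * (k + 2 * (j : ℕ) - 1) + (i : ℕ) + 1 : ℕ) : ℤ) ω) ⁻¹' S)).toReal ≤ _
  rw [hblocks, ← measureReal_def, ← map_measureReal_apply
    (measurable_pi_lambda _ fun j => measurable_block hZmeas a (b j)) hS]
  calc _ ≤ (Measure.pi fun _ => P.map (block Z a 1)).real S + m * betaMix P Z a :=
        hstat.measureReal_map_blocks_le hZmeas a m b
          (fun i j hij => alternateBlocks_gap (by omega) hij) 1 hS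
    _ ≤ ℱ.card * Real.exp (-2 * (m + 1 : ℕ) * ε ^ 2 / (M - 0) ^ 2) + m * betaMix P Z a := by
        gcongr
        exact hstat.measureReal_pi_exists_risk_sub_ge_le hZmeas (by omega) ℱ hFmeas hFbdd
          (by omega) hε.le 1
    _ ≤ _ := by
        rw [sub_zero, Nat.cast_add_one, add_sub_cancel_right]
        gcongr
        · exact_mod_cast hcard
        · have : 0 ≤ ((m : ℝ) + 1) * ε ^ 2 := by positivity
          linarith

/-- Deviation bound on the odd or even blocks (inequality (9) in the paper): for a
quantized class `ℱ` of cardinality at most `2^(Bp)` of `[0,M]`-valued losses, and for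
`k ∈ {1,2}`, the probability that some `f ∈ ℱ` has a deviation at least `ε` between
its risk `L f = E[f (Z 1)]` and its empirical block average
`(1/μ) ∑_{j=0}^{μ-1} h_f(B_{k+2j})` is at most
`2^(Bp) exp(-με²/M²) + (μ-1)β(a)`. -/
theorem block_deviation_bound
    {Ω 𝒵 : Type*} [MeasurableSpace Ω] [MeasurableSpace 𝒵]
    (P : Measure Ω) [IsProbabilityMeasure P]
    (Z : ℤ → Ω → 𝒵) (hZmeas : ∀ t, Measurable (Z t))
    (hstat : Stationary P Z)
    (a μ : ℕ) (ha : 1 ≤ a) (hμ : 1 ≤ μ)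
    (n : ℕ) (hn : n = 2 * a * μ)
    (M : ℝ) (hM : 0 < M)
    (B p : ℕ) (hB : 0 < B) (hp : 0 < p)
    (ℱ : Finset (𝒵 → ℝ))
    (hFmeas : ∀ f ∈ ℱ, Measurable f)
    (hFbdd : ∀ f ∈ ℱ, ∀ z, f z ∈ Set.Icc (0 : ℝ) M)
    (hcard : ℱ.card ≤ 2 ^ (B * p))
    (k : ℕ) (hk : k = 1 ∨ k = 2)
    (ε : ℝ) (hε : 0 < ε) :
    (P {ω | ∃ f ∈ ℱ,
        ∫ ω', f (Z 1 ω') ∂P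
          - (1 / μ) * ∑ j : Fin μ, (1 / a) *
              ∑ i : Fin a, f (Z ((a * (k + 2 * (j : ℕ) - 1) + (i : ℕ) + 1 : ℕ) : ℤ) ω)
          ≥ ε}).toReal
      ≤ (2 : ℝ) ^ (B * p) * Real.exp (-(μ * ε ^ 2) / M ^ 2)
        + ((μ : ℝ) - 1) * betaMix P Z a :=
  block_deviation_bound_general P Z hZmeas hstat a μ ha hμ M B p ℱ hFmeas hFbdd hcard k hk ε hε
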